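/- Let T : U → GL_r(C) be a holomorphic matrix function on a simply connected open set U ⊆ Cʳ, and suppose the 1-form θ := T^{-1}dT (with blocks θᵢ = T^{-1}∂ᵢT) satisfies the symmetry (θᵢ)_{kj} = (θⱼ)_{ki} for all 1 ≤ i,j,k ≤ r. Then the vector fields ∂̂ᵢ := Σⱼ (T^{-1})_{jᵢ} ∂ⱼ commute pairwise: [∂̂ᵢ, ∂̂ⱼ] = 0 for all i,j. -/

import Mathlib

/-!
Write `S = T⁻¹` and `θ_a = S ∂_a T`, so that `∂_a S = -θ_a S`. By the product rule,
`∂̂_i ∂̂_j f` has a second-order part `∑_{a,b} S_{ai} S_{bj} ∂_a ∂_b f`, symmetric in `i, j` by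
Schwarz's theorem, and a first-order part with coefficients
`∑_a S_{ai} ∂_a S_{bj} = -∑_{a,c} S_{ai} (θ_a)_{bc} S_{cj}`, which the hypothesis
`(θ_a)_{bc} = (θ_c)_{ba}` makes symmetric in `i, j` as well.
-/

/-- Partial derivative of a matrix-valued function of t, taken entrywise. -/
noncomputable def pdm {r : ℕ} (F : (Fin r → ℂ) → Matrix (Fin r) (Fin r) ℂ)
    (i : Fin r) (t : Fin r → ℂ) : Matrix (Fin r) (Fin r) ℂ :=
  Matrix.of fun k l => fderiv ℂ (fun x => F x k l) t (Pi.single i 1)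

open Matrix Finset

theorem sum_mul_mul_apply_comm {R n : Type*} [CommSemiring R] [Fintype n] (S : Matrix n n R)
    (θ : n → Matrix n n R) (hθ : ∀ i j k, θ i k j = θ j k i) (i j b : n) :
    ∑ a, S a i * (θ a * S) b j = ∑ a, S a j * (θ a * S) b i := by
  simp only [mul_apply, mul_sum]
  rw [sum_comm]
  refine sum_congr rfl fun c _ => sum_congr rfl fun a _ => ?_
  rw [hθ c a b]
  ring

section EntrywiseCalculus

variable {𝕜 E : Type*} [NontriviallyNormedField 𝕜] [NormedAddCommGroup E] [NormedSpace 𝕜 E]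
  {t : E}

noncomputable def entrywiseFDeriv {m n : Type*} (M : E → Matrix m n 𝕜) (t v : E) :
    Matrix m n 𝕜 :=
  Matrix.of fun k l => fderiv 𝕜 (fun x => M x k l) t v

theorem entrywiseFDeriv_mul {m n p : Type*} [Fintype n] {A : E → Matrix m n 𝕜}
    {B : E → Matrix n p 𝕜} (hA : ∀ i k, DifferentiableAt 𝕜 (fun x => A x i k) t)
    (hB : ∀ k j, DifferentiableAt 𝕜 (fun x => B x k j) t) (v : E) :
    entrywiseFDeriv (fun x => A x * B x) t v
      = entrywiseFDeriv A t v * B t + A t * entrywiseFDeriv B t v := by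
  ext i j
  simp only [entrywiseFDeriv, of_apply, mul_apply, Matrix.add_apply, ← sum_add_distrib]
  rw [fderiv_fun_sum (A := fun k x => A x i k * B x k j) fun k _ => (hA i k).mul (hB k j),
    _root_.sum_apply]
  refine sum_congr rfl fun k _ => ?_
  rw [fderiv_fun_mul (hA i k) (hB k j)]
  simp only [_root_.add_apply, _root_.smul_apply, smul_eq_mul]
  ring

theorem differentiableAt_det {n : Type*} [Fintype n] [DecidableEq n] {M : E → Matrix n n 𝕜}
    (hM : ∀ k l, DifferentiableAt 𝕜 (fun x => M x k l) t) :
    DifferentiableAt 𝕜 (fun x => (M x).det) t := by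
  simp only [det_apply']
  fun_prop

theorem differentiableAt_adjugate_apply {n : Type*} [Fintype n] [DecidableEq n]
    {M : E → Matrix n n 𝕜} (hM : ∀ k l, DifferentiableAt 𝕜 (fun x => M x k l) t) (k l : n) :
    DifferentiableAt 𝕜 (fun x => (M x).adjugate k l) t := by
  simp only [adjugate_apply]
  refine differentiableAt_det fun a b => ?_
  by_cases hal : a = l
  · simp [updateRow_apply, hal]
  · simpa [updateRow_apply, hal] using hM a b

theorem differentiableAt_inv_apply {n : Type*} [Fintype n] [DecidableEq n]
    {M : E → Matrix n n 𝕜} (hM : ∀ k l, DifferentiableAt 𝕜 (fun x => M x k l) t)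
    (hMt : IsUnit (M t)) (k l : n) :
    DifferentiableAt 𝕜 (fun x => (M x)⁻¹ k l) t := by
  have hdet : (M t).det ≠ 0 := ((isUnit_iff_isUnit_det _).mp hMt).ne_zero
  simp only [Matrix.inv_def, Matrix.smul_apply, Ring.inverse_eq_inv', smul_eq_mul]
  exact ((differentiableAt_det hM).inv hdet).mul (differentiableAt_adjugate_apply hM k l)

theorem entrywiseFDeriv_inv {n : Type*} [Fintype n] [DecidableEq n]
    {M : E → Matrix n n 𝕜} (hM : ∀ k l, DifferentiableAt 𝕜 (fun x => M x k l) t)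
    (hMt : IsUnit (M t)) (v : E) :
    entrywiseFDeriv (fun x => (M x)⁻¹) t v
      = -((M t)⁻¹ * entrywiseFDeriv M t v * (M t)⁻¹) := by
  have hdet : IsUnit (M t).det := (isUnit_iff_isUnit_det _).mp hMt
  have hunit : ∀ᶠ x in nhds t, M x * (M x)⁻¹ = 1 := by
    filter_upwards [(differentiableAt_det hM).continuousAt.eventually_ne hdet.ne_zero] with x hx
    exact mul_nonsing_inv _ (isUnit_iff_ne_zero.mpr hx)
  have hconst : entrywiseFDeriv (fun x => M x * (M x)⁻¹) t v = 0 := by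
    ext k l
    have hkl : (fun x => (M x * (M x)⁻¹) k l) =ᶠ[nhds t] fun _ => (1 : Matrix n n 𝕜) k l :=
      hunit.mono fun x hx => by simp only [hx]
    simp [entrywiseFDeriv, hkl.fderiv_eq]
  rw [entrywiseFDeriv_mul hM (differentiableAt_inv_apply hM hMt) v] at hconst
  calc entrywiseFDeriv (fun x => (M x)⁻¹) t v
      = (M t)⁻¹ * (M t * entrywiseFDeriv (fun x => (M x)⁻¹) t v) := by
        rw [← Matrix.mul_assoc, nonsing_inv_mul _ hdet, Matrix.one_mul]
    _ = -((M t)⁻¹ * entrywiseFDeriv M t v * (M t)⁻¹) := by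
        rw [eq_neg_of_add_eq_zero_right hconst, Matrix.mul_neg, Matrix.mul_assoc]

variable {n : Type*} [Fintype n]

/-- The vector field `∂̂_i = ∑_j S_{ji} ∂_{e_j}`; the theorem uses `S = T⁻¹` and the coordinate
frame `e_j = Pi.single j 1`. -/
noncomputable def columnVectorField (S : E → Matrix n n 𝕜) (e : n → E) (i : n) (f : E → 𝕜) :
    E → 𝕜 :=
  fun x => ∑ j, S x j i * fderiv 𝕜 f x (e j)

theorem fderiv_columnVectorField_apply {S : E → Matrix n n 𝕜} {e : n → E} {f : E → 𝕜}
    (hS : ∀ k l, DifferentiableAt 𝕜 (fun x => S x k l) t)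
    (hf : ∀ b, DifferentiableAt 𝕜 (fun x => fderiv 𝕜 f x (e b)) t) (j : n) (v : E) :
    fderiv 𝕜 (columnVectorField S e j f) t v
      = ∑ b, (entrywiseFDeriv S t v b j * fderiv 𝕜 f t (e b)
        + S t b j * fderiv 𝕜 (fun x => fderiv 𝕜 f x (e b)) t v) := by
  unfold columnVectorField
  rw [fderiv_fun_sum (A := fun b x => S x b j * fderiv 𝕜 f x (e b))
    fun b _ => (hS b j).mul (hf b), _root_.sum_apply]
  refine sum_congr rfl fun b _ => ?_
  rw [fderiv_fun_mul (hS b j) (hf b)]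
  simp only [_root_.add_apply, _root_.smul_apply, smul_eq_mul, entrywiseFDeriv, of_apply]
  ring

theorem columnVectorField_columnVectorField_apply {S : E → Matrix n n 𝕜} {e : n → E}
    {f : E → 𝕜} (hS : ∀ k l, DifferentiableAt 𝕜 (fun x => S x k l) t)
    (hf : ∀ b, DifferentiableAt 𝕜 (fun x => fderiv 𝕜 f x (e b)) t) (i j : n) :
    columnVectorField S e i (columnVectorField S e j f) t
      = ∑ b, (∑ a, S t a i * entrywiseFDeriv S t (e a) b j) * fderiv 𝕜 f t (e b)
        + ∑ a, ∑ b, S t a i * S t b j * fderiv 𝕜 (fun x => fderiv 𝕜 f x (e b)) t (e a) := by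
  simp only [columnVectorField, fderiv_columnVectorField_apply hS hf, mul_add, sum_add_distrib,
    mul_sum, sum_mul, mul_assoc]
  rw [sum_comm (γ := n)
    (f := fun a b => S t a i * (entrywiseFDeriv S t (e a) b j * fderiv 𝕜 f t (e b)))]

end EntrywiseCalculus

section SecondDerivatives

variable {𝕜 E : Type*} [RCLike 𝕜] [NormedAddCommGroup E] [NormedSpace 𝕜 E] {t : E}

theorem fderiv_fderiv_apply_comm {f : E → 𝕜} (hf : ContDiffAt 𝕜 2 f t) (v w : E) :
    fderiv 𝕜 (fun x => fderiv 𝕜 f x v) t w = fderiv 𝕜 (fun x => fderiv 𝕜 f x w) t v := by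
  have hf' : DifferentiableAt 𝕜 (fderiv 𝕜 f) t :=
    (hf.fderiv_right (m := 1) le_rfl).differentiableAt one_ne_zero
  have happly : ∀ v w : E,
      fderiv 𝕜 (fun x => fderiv 𝕜 f x v) t w = fderiv 𝕜 (fderiv 𝕜 f) t w v := by
    intro v w
    rw [fderiv_clm_apply hf' (differentiableAt_const v)]
    simp
  rw [happly, happly]
  exact hf.isSymmSndFDerivAt (by simp) w v

variable {n : Type*} [Fintype n]

theorem columnVectorField_comm_apply {S : E → Matrix n n 𝕜} {e : n → E} {f : E → 𝕜}
    (hS : ∀ k l, DifferentiableAt 𝕜 (fun x => S x k l) t) (hf : ContDiffAt 𝕜 2 f t) {i j : n}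
    (hsym : ∀ b, ∑ a, S t a i * entrywiseFDeriv S t (e a) b j
      = ∑ a, S t a j * entrywiseFDeriv S t (e a) b i) :
    columnVectorField S e i (columnVectorField S e j f) t
      = columnVectorField S e j (columnVectorField S e i f) t := by
  have hf' : ∀ b, DifferentiableAt 𝕜 (fun x => fderiv 𝕜 f x (e b)) t := fun b =>
    ((hf.fderiv_right (m := 1) le_rfl).differentiableAt one_ne_zero).clm_apply
      (differentiableAt_const _)
  rw [columnVectorField_columnVectorField_apply hS hf',
    columnVectorField_columnVectorField_apply hS hf',
    sum_comm (γ := n) (f := fun a b => S t a j * S t b i * _)]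
  simp only [hsym]
  refine congrArg _ (sum_congr rfl fun b _ => sum_congr rfl fun a _ => ?_)
  rw [fderiv_fderiv_apply_comm hf]
  ring

theorem columnVectorField_inv_comm_apply [DecidableEq n] {T : E → Matrix n n 𝕜} {e : n → E}
    {f : E → 𝕜} (hT : ∀ k l, DifferentiableAt 𝕜 (fun x => T x k l) t) (hTt : IsUnit (T t))
    (hsym : ∀ i j k, ((T t)⁻¹ * entrywiseFDeriv T t (e i)) k j
      = ((T t)⁻¹ * entrywiseFDeriv T t (e j)) k i)
    (hf : ContDiffAt 𝕜 2 f t) (i j : n) :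
    columnVectorField (fun x => (T x)⁻¹) e i (columnVectorField (fun x => (T x)⁻¹) e j f) t
      = columnVectorField (fun x => (T x)⁻¹) e j
          (columnVectorField (fun x => (T x)⁻¹) e i f) t := by
  refine columnVectorField_comm_apply (differentiableAt_inv_apply hT hTt) hf fun b => ?_
  simp only [entrywiseFDeriv_inv hT hTt, Matrix.neg_apply, mul_neg, sum_neg_distrib, neg_inj]
  exact sum_mul_mul_apply_comm _ (fun a => (T t)⁻¹ * entrywiseFDeriv T t (e a)) hsym i j b

end SecondDerivatives

/-- key step of Proposition 5.2: if θ = T⁻¹dT satisfies the symmetry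
(θᵢ)_{kj} = (θⱼ)_{ki}, then the vector fields ∂̂ᵢ = Σⱼ (T⁻¹)_{jᵢ}∂ⱼ commute pairwise
(as operators on twice continuously differentiable functions). -/
theorem stmt9 {r : ℕ} (U : Set (Fin r → ℂ)) (hU : IsOpen U)
    (T : (Fin r → ℂ) → Matrix (Fin r) (Fin r) ℂ)
    (hT : ∀ k l, DifferentiableOn ℂ (fun t => T t k l) U)
    (hTu : ∀ t ∈ U, IsUnit (T t))
    (hsym : ∀ t ∈ U, ∀ i j k,
      ((T t)⁻¹ * pdm T i t) k j = ((T t)⁻¹ * pdm T j t) k i) :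
    ∀ (f : (Fin r → ℂ) → ℂ), ContDiff ℂ 2 f → ∀ t ∈ U, ∀ i j,
      (∑ a, ((T t)⁻¹) a i *
        fderiv ℂ (fun x => ∑ b, ((T x)⁻¹) b j * fderiv ℂ f x (Pi.single b 1))
          t (Pi.single a 1))
      = (∑ a, ((T t)⁻¹) a j *
        fderiv ℂ (fun x => ∑ b, ((T x)⁻¹) b i * fderiv ℂ f x (Pi.single b 1))
          t (Pi.single a 1)) := by
  intro f hf t ht i j
  exact columnVectorField_inv_comm_apply (e := fun b => Pi.single b 1)
    (fun k l => (hT k l).differentiableAt (hU.mem_nhds ht)) (hTu t ht) (hsym t ht)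
    hf.contDiffAt i j
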